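/- Let S be a set of positive integers, r ≥ 1 an integer, and n ≥ 1, k ≥ 1 integers. Then (n+r)·L_{S,r}(n,k) = Σ_{s∈S} s·s!·C(n,s)·L_{S,r}(n−s, k−1) + r·Σ_{s∈S} s·s!·C(n, s−1)·L_{S,r−1}(n−s+1, k), where both sums have only finitely many nonzero terms. -/

import Mathlib

open Finset
open scoped Classical

/-- A partition of `Fin N` into nonempty lists of distinct elements:
every element lies in exactly one list of `P`. -/
def IsListPartition {N : ℕ} (P : Finset (List (Fin N))) : Prop :=
  (∀ l ∈ P, l ≠ [] ∧ l.Nodup) ∧ ∀ x : Fin N, ∃! l, l ∈ P ∧ x ∈ l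

/-- The set of partitions of `{1,…,n+r}` (encoded as `Fin (n+r)`) into `k+r` nonempty
lists whose lengths lie in `S`, such that the first `r` elements lie in distinct lists. -/
def srLahSet (S : Set ℕ) (r n k : ℕ) : Set (Finset (List (Fin (n + r)))) :=
  {P | IsListPartition P ∧ P.card = k + r ∧ (∀ l ∈ P, l.length ∈ S) ∧
    ∀ i j : Fin (n + r), (i : ℕ) < r → (j : ℕ) < r → i ≠ j →
      ∀ l ∈ P, i ∈ l → j ∉ l}

/-- The `(S,r)`-Lah number `L_{S,r}(n,k)`. -/
noncomputable def srLah (S : Set ℕ) (r n k : ℕ) : ℕ := Nat.card (srLahSet S r n k)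

/-- The `(S,r)`-Lah number with integer arguments, zero for negative arguments. -/
noncomputable def srLahZ (S : Set ℕ) (r : ℕ) (n k : ℤ) : ℤ :=
  if 0 ≤ n ∧ 0 ≤ k then srLah S r n.toNat k.toNat else 0

/-! Summing the lengths of the lists of a partition gives `n + r`, so `(n + r) L_{S,r}(n,k)` counts
partitions with one marked list, weighted by its length. Removing the marked list leaves a
partition of the remaining elements into one list fewer. The marked list contains at most one of
the `r` distinguished elements: if none, it is one of the `n^(s) = s! C(n,s)` arrangements of
length `s` of the other elements and `r` distinguished elements remain; if one, it is one of the
`(n+1)^(s) - n^(s) = s! C(n,s-1)` arrangements through that element and `r - 1` remain. -/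

open Function

theorem Nat.succ_descFactorial_sub_descFactorial (n s : ℕ) :
    (n + 1).descFactorial s - n.descFactorial s = s * n.descFactorial (s - 1) := by
  cases s with
  | zero => simp
  | succ t =>
    rw [Nat.succ_descFactorial_succ, Nat.descFactorial_succ, ← Nat.sub_mul, add_tsub_cancel_right]
    rcases le_or_gt t n with h | h
    · congr 1; omega
    · simp [Nat.descFactorial_eq_zero_iff_lt.2 h]

variable {α β : Type*}

section NodupLists

variable [DecidableEq α]

noncomputable def nodupLists (B : Finset α) (s : ℕ) : Finset (List α) :=
  univ.image fun e : Fin s ↪ B => List.ofFn fun i => (e i : α)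

theorem mem_nodupLists {B : Finset α} {s : ℕ} {l : List α} :
    l ∈ nodupLists B s ↔ l.Nodup ∧ l.length = s ∧ ∀ x ∈ l, x ∈ B := by
  constructor
  · simp only [nodupLists, mem_image, mem_univ, true_and]
    rintro ⟨e, rfl⟩
    refine ⟨List.nodup_ofFn.2 (Subtype.val_injective.comp e.injective), List.length_ofFn, ?_⟩
    simp [List.mem_ofFn]
  · rintro ⟨hnd, rfl, hB⟩
    refine mem_image.2 ⟨⟨fun i => ⟨l.get i, hB _ (l.get_mem i)⟩, fun i j h => ?_⟩, mem_univ _,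
      List.ofFn_get l⟩
    exact List.nodup_iff_injective_get.1 hnd (congrArg Subtype.val h)

theorem card_nodupLists (B : Finset α) (s : ℕ) :
    #(nodupLists B s) = B.card.descFactorial s := by
  rw [nodupLists, card_image_of_injective, card_univ, Fintype.card_embedding_eq,
    Fintype.card_fin, Fintype.card_coe]
  exact fun e e' h => DFunLike.ext _ _ fun i => Subtype.ext (congrFun (List.ofFn_injective h) i)

theorem length_le_card_of_mem_nodupLists {B : Finset α} {s : ℕ} {l : List α}
    (hl : l ∈ nodupLists B s) : l.length ≤ B.card := by
  obtain ⟨hnd, -, hB⟩ := mem_nodupLists.1 hl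
  rw [← List.toFinset_card_of_nodup hnd]
  exact card_le_card fun x hx => hB x (List.mem_toFinset.1 hx)

theorem eq_of_mem_of_mem_nodupLists_insert_sdiff {A R : Finset α} {i j : α} {s : ℕ} {l : List α}
    (hl : l ∈ nodupLists (insert i (A \ R)) s) (hj : j ∈ R) (hjl : j ∈ l) : j = i :=
  (mem_insert.1 ((mem_nodupLists.1 hl).2.2 j hjl)).resolve_right fun h => (mem_sdiff.1 h).2 hj

theorem card_nodupLists_insert_filter_mem {B : Finset α} {i : α} (hi : i ∉ B) (s : ℕ) :
    #((nodupLists (insert i B) s).filter (i ∈ ·)) = s * B.card.descFactorial (s - 1) := by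
  have hcompl : (nodupLists (insert i B) s).filter (i ∉ ·) = nodupLists B s := by
    ext l
    simp only [mem_filter, mem_nodupLists, mem_insert]
    constructor
    · rintro ⟨⟨hnd, hs, hl⟩, hil⟩
      exact ⟨hnd, hs, fun x hx => (hl x hx).resolve_left (by rintro rfl; exact hil hx)⟩
    · rintro ⟨hnd, hs, hl⟩
      exact ⟨⟨hnd, hs, fun x hx => Or.inr (hl x hx)⟩, fun h => hi (hl i h)⟩
  have := card_filter_add_card_filter_not (s := nodupLists (insert i B) s) (i ∈ ·)
  rw [hcompl, card_nodupLists, card_nodupLists, card_insert_of_notMem hi] at this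
  rw [← Nat.succ_descFactorial_sub_descFactorial]
  omega

end NodupLists

def IsLahBlock (S : Set ℕ) (A R : Finset α) (l : List α) : Prop :=
  l ≠ [] ∧ l.Nodup ∧ l.length ∈ S ∧ (∀ x ∈ l, x ∈ A) ∧ ∀ i ∈ R, ∀ j ∈ R, i ∈ l → j ∈ l → i = j

/-- `srLahSet` on an arbitrary finite ground set `A` with distinguished elements `R`: this is the
form in which partitions survive the removal of one of their lists. -/
def lahPartitions (S : Set ℕ) (A R : Finset α) (m : ℕ) : Set (Finset (List α)) :=
  {P | (∀ l ∈ P, IsLahBlock S A R l) ∧ (∀ x ∈ A, ∃ l ∈ P, x ∈ l) ∧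
    (∀ l₁ ∈ P, ∀ l₂ ∈ P, ∀ x ∈ l₁, x ∈ l₂ → l₁ = l₂) ∧ P.card = m}

theorem srLahSet_eq_lahPartitions (S : Set ℕ) (r n k : ℕ) :
    srLahSet S r n k =
      lahPartitions S univ (univ.filter fun i : Fin (n + r) => (i : ℕ) < r) (k + r) := by
  ext P
  simp only [srLahSet, lahPartitions, IsListPartition, IsLahBlock, Set.mem_ofPred_eq, mem_filter,
    mem_univ, true_and, implies_true, forall_const]
  constructor
  · rintro ⟨⟨hblock, hunique⟩, hcard, hlen, hsep⟩
    refine ⟨fun l hl => ⟨(hblock l hl).1, (hblock l hl).2, hlen l hl, fun i hi j hj hil hjl => ?_⟩,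
      fun x => (hunique x).exists,
      fun l₁ h₁ l₂ h₂ x hx₁ hx₂ => (hunique x).unique ⟨h₁, hx₁⟩ ⟨h₂, hx₂⟩, hcard⟩
    by_contra hij
    exact hsep i j hi hj hij l hl hil hjl
  · rintro ⟨hblock, hcover, hdisj, hcard⟩
    refine ⟨⟨fun l hl => ⟨(hblock l hl).1, (hblock l hl).2.1⟩, fun x => ?_⟩, hcard,
      fun l hl => (hblock l hl).2.2.1,
      fun i j hi hj hij l hl hil hjl => hij ((hblock l hl).2.2.2 i hi j hj hil hjl)⟩
    obtain ⟨l, hl, hxl⟩ := hcover x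
    exact ⟨l, ⟨hl, hxl⟩, fun l' ⟨hl', hxl'⟩ => hdisj l' hl' l hl x hxl' hxl⟩

section Relabel

variable [DecidableEq β] {S : Set ℕ} {A R : Finset α} {m : ℕ} {f : α → β}

theorem isLahBlock_map_iff (hf : Injective f) {l : List α} :
    IsLahBlock S (A.image f) (R.image f) (l.map f) ↔ IsLahBlock S A R l := by
  simp only [IsLahBlock, ne_eq, List.map_eq_nil_iff, List.nodup_map_iff hf, List.length_map,
    List.forall_mem_map, hf.mem_finset_image, forall_mem_image, List.mem_map_of_injective hf,
    hf.eq_iff]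

theorem image_map_mem_lahPartitions_iff (hf : Injective f) {P : Finset (List α)} :
    P.image (List.map f) ∈ lahPartitions S (A.image f) (R.image f) m ↔
      P ∈ lahPartitions S A R m := by
  simp only [lahPartitions, Set.mem_ofPred_eq, forall_mem_image, exists_mem_image,
    isLahBlock_map_iff hf, List.forall_mem_map, List.mem_map_of_injective hf,
    (List.map_injective_iff.2 hf).eq_iff, card_image_of_injective _ (List.map_injective_iff.2 hf)]

theorem lahPartitions_image (hf : Injective f) :
    lahPartitions S (A.image f) (R.image f) m = image (List.map f) '' lahPartitions S A R m := by
  ext Q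
  refine ⟨fun hQ => ?_, ?_⟩
  · have hlift : ∀ l ∈ Q, l ∈ Set.range (List.map f) := fun l hl => by
      rw [Set.range_list_map]
      intro y hy
      obtain ⟨x, -, rfl⟩ := mem_image.1 ((hQ.1 l hl).2.2.2.1 y hy)
      exact ⟨x, rfl⟩
    set P := Q.preimage (List.map f) (List.map_injective_iff.2 hf).injOn
    have hQ' : P.image (List.map f) = Q := by rw [image_preimage, filter_true_of_mem hlift]
    refine ⟨P, ?_, hQ'⟩
    rwa [← image_map_mem_lahPartitions_iff hf, hQ']
  · rintro ⟨P, hP, rfl⟩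
    exact (image_map_mem_lahPartitions_iff hf).2 hP

theorem card_lahPartitions_image (hf : Injective f) :
    Nat.card (lahPartitions S (A.image f) (R.image f) m) = Nat.card (lahPartitions S A R m) := by
  rw [lahPartitions_image hf,
    Nat.card_image_of_injective (image_injective (List.map_injective_iff.2 hf))]

end Relabel

theorem card_lahPartitions_eq_srLah [DecidableEq α] {S : Set ℕ} {A R : Finset α} (hRA : R ⊆ A)
    {r n k : ℕ} (hR : R.card = r) (hA : A.card = n + r) :
    Nat.card (lahPartitions S A R (k + r)) = srLah S r n k := by
  have hB : (A \ R).card = n := by rw [card_sdiff_of_subset hRA]; omega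
  let eR := R.equivFinOfCardEq hR
  let eB := (A \ R).equivFinOfCardEq hB
  let f : Fin (n + r) → α := fun j =>
    if h : (j : ℕ) < r then eR.symm ⟨j, h⟩ else eB.symm ⟨j - r, by omega⟩
  have hfR {j : Fin (n + r)} (h : (j : ℕ) < r) : f j = eR.symm ⟨j, h⟩ := dif_pos h
  have hfB {j : Fin (n + r)} (h : ¬ (j : ℕ) < r) : f j = eB.symm ⟨j - r, by omega⟩ := dif_neg h
  have hf : Injective f := by
    intro j j' h
    by_cases hj : (j : ℕ) < r <;> by_cases hj' : (j' : ℕ) < r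
    · rw [hfR hj, hfR hj'] at h
      simpa [Fin.ext_iff] using eR.symm.injective (Subtype.ext h)
    · rw [hfR hj, hfB hj'] at h
      exact absurd (h ▸ (eR.symm _).2) (mem_sdiff.1 (eB.symm _).2).2
    · rw [hfB hj, hfR hj'] at h
      exact absurd (h ▸ (eR.symm _).2) (mem_sdiff.1 (eB.symm _).2).2
    · rw [hfB hj, hfB hj'] at h
      have := congrArg Fin.val (eB.symm.injective (Subtype.ext h))
      simp only at this
      omega
  have hfA (j : Fin (n + r)) : f j ∈ A := by
    by_cases hj : (j : ℕ) < r
    · exact hRA (hfR hj ▸ (eR.symm _).2)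
    · exact (mem_sdiff.1 (hfB hj ▸ (eB.symm _).2)).1
  have himage : univ.image f = A := by
    refine eq_of_subset_of_card_le (fun a ha => ?_) ?_
    · obtain ⟨j, -, rfl⟩ := mem_image.1 ha
      exact hfA j
    · rw [card_image_of_injective _ hf, card_univ, Fintype.card_fin, hA]
  have himageR : (univ.filter fun j : Fin (n + r) => (j : ℕ) < r).image f = R := by
    refine eq_of_subset_of_card_le (fun a ha => ?_) ?_
    · obtain ⟨j, hj, rfl⟩ := mem_image.1 ha
      exact hfR (mem_filter.1 hj).2 ▸ (eR.symm _).2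
    · rw [card_image_of_injective _ hf, Fin.card_filter_val_lt, hR]
      omega
  rw [srLah, srLahSet_eq_lahPartitions, ← card_lahPartitions_image hf, himage, himageR]

section Blocks

variable [DecidableEq α] {S : Set ℕ} {A R : Finset α} {m : ℕ}

theorem sum_length_eq_card {P : Finset (List α)} (hP : P ∈ lahPartitions S A R m) :
    ∑ l ∈ P, l.length = A.card := by
  obtain ⟨hblock, hcover, hdisj, -⟩ := hP
  have hA : A = P.biUnion List.toFinset := by
    ext x
    simp only [mem_biUnion, List.mem_toFinset]
    exact ⟨hcover x, fun ⟨l, hl, hx⟩ => (hblock l hl).2.2.2.1 x hx⟩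
  rw [hA, card_biUnion]
  · exact sum_congr rfl fun l hl => (List.toFinset_card_of_nodup (hblock l hl).2.1).symm
  · intro l₁ h₁ l₂ h₂ hne
    exact disjoint_left.2 fun x hx₁ hx₂ =>
      hne (hdisj l₁ h₁ l₂ h₂ x (List.mem_toFinset.1 hx₁) (List.mem_toFinset.1 hx₂))

theorem erase_mem_lahPartitions {P : Finset (List α)} {L : List α}
    (hP : P ∈ lahPartitions S A R m) (hL : L ∈ P) :
    P.erase L ∈ lahPartitions S (A \ L.toFinset) (R \ L.toFinset) (m - 1) := by
  obtain ⟨hblock, hcover, hdisj, hcard⟩ := hP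
  have hout : ∀ l ∈ P.erase L, ∀ x ∈ l, x ∉ L := fun l hl x hx hxL =>
    ne_of_mem_erase hl (hdisj l (mem_of_mem_erase hl) L hL x hx hxL)
  refine ⟨fun l hl => ?_, fun x hx => ?_,
    fun l₁ h₁ l₂ h₂ => hdisj l₁ (mem_of_mem_erase h₁) l₂ (mem_of_mem_erase h₂),
    by rw [card_erase_of_mem hL, hcard]⟩
  · obtain ⟨hne, hnd, hS, hA, hR⟩ := hblock l (mem_of_mem_erase hl)
    exact ⟨hne, hnd, hS,
      fun x hx => mem_sdiff.2 ⟨hA x hx, fun h => hout l hl x hx (List.mem_toFinset.1 h)⟩,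
      fun i hi j hj => hR i (mem_sdiff.1 hi).1 j (mem_sdiff.1 hj).1⟩
  · obtain ⟨hxA, hxL⟩ := mem_sdiff.1 hx
    obtain ⟨l, hl, hxl⟩ := hcover x hxA
    exact ⟨l, mem_erase.2 ⟨fun h => hxL (List.mem_toFinset.2 (h ▸ hxl)), hl⟩, hxl⟩

theorem notMem_of_mem_lahPartitions_sdiff {Q : Finset (List α)} {L : List α} (hL : L ≠ [])
    (hQ : Q ∈ lahPartitions S (A \ L.toFinset) (R \ L.toFinset) m) : L ∉ Q := fun h => by
  obtain ⟨x, hx⟩ := List.exists_mem_of_ne_nil L hL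
  exact (mem_sdiff.1 ((hQ.1 L h).2.2.2.1 x hx)).2 (List.mem_toFinset.2 hx)

theorem insert_mem_lahPartitions {Q : Finset (List α)} {L : List α} (hL : IsLahBlock S A R L)
    (hQ : Q ∈ lahPartitions S (A \ L.toFinset) (R \ L.toFinset) m) :
    insert L Q ∈ lahPartitions S A R (m + 1) := by
  have hLQ := notMem_of_mem_lahPartitions_sdiff hL.1 hQ
  obtain ⟨hblock, hcover, hdisj, hcard⟩ := hQ
  have hout : ∀ l ∈ Q, ∀ x ∈ l, x ∉ L := fun l hl x hx hxL =>
    (mem_sdiff.1 ((hblock l hl).2.2.2.1 x hx)).2 (List.mem_toFinset.2 hxL)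
  refine ⟨fun l hl => ?_, fun x hx => ?_, fun l₁ h₁ l₂ h₂ x hx₁ hx₂ => ?_,
    by rw [card_insert_of_notMem hLQ, hcard]⟩
  · rcases mem_insert.1 hl with rfl | hl
    · exact hL
    obtain ⟨hne, hnd, hS, hA, hR⟩ := hblock l hl
    have hRL {i} (hi : i ∈ R) (hil : i ∈ l) : i ∈ R \ L.toFinset :=
      mem_sdiff.2 ⟨hi, fun h => hout l hl i hil (List.mem_toFinset.1 h)⟩
    exact ⟨hne, hnd, hS, fun x hx => (mem_sdiff.1 (hA x hx)).1,
      fun i hi j hj hil hjl => hR i (hRL hi hil) j (hRL hj hjl) hil hjl⟩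
  · by_cases hxL : x ∈ L
    · exact ⟨L, mem_insert_self L Q, hxL⟩
    obtain ⟨l, hl, hxl⟩ := hcover x (mem_sdiff.2 ⟨hx, fun h => hxL (List.mem_toFinset.1 h)⟩)
    exact ⟨l, mem_insert_of_mem hl, hxl⟩
  · rcases mem_insert.1 h₁ with rfl | hQ₁ <;> rcases mem_insert.1 h₂ with rfl | hQ₂
    · rfl
    · exact absurd hx₁ (hout l₂ hQ₂ x hx₂)
    · exact absurd hx₂ (hout l₁ hQ₁ x hx₁)
    · exact hdisj l₁ hQ₁ l₂ hQ₂ x hx₁ hx₂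

theorem card_lahPartitions_mem {L : List α} (hL : IsLahBlock S A R L) (hm : 1 ≤ m) :
    Nat.card {P ∈ lahPartitions S A R m | L ∈ P} =
      Nat.card (lahPartitions S (A \ L.toFinset) (R \ L.toFinset) (m - 1)) := by
  refine Nat.card_congr
    { toFun P := ⟨P.1.erase L, erase_mem_lahPartitions P.2.1 P.2.2⟩
      invFun Q := ⟨insert L Q.1, ?_, mem_insert_self _ _⟩
      left_inv P := Subtype.ext (insert_erase P.2.2)
      right_inv Q := Subtype.ext (erase_insert (notMem_of_mem_lahPartitions_sdiff hL.1 Q.2)) }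
  simpa only [Nat.sub_add_cancel hm] using insert_mem_lahPartitions hL Q.2

theorem card_mul_card_lahPartitions {U : Finset (List α)}
    (hU : ∀ l, l ∈ U ↔ IsLahBlock S A R l) (hm : 1 ≤ m) :
    A.card * Nat.card (lahPartitions S A R m) = ∑ l ∈ U,
      l.length * Nat.card (lahPartitions S (A \ l.toFinset) (R \ l.toFinset) (m - 1)) := by
  have hfin : (lahPartitions S A R m).Finite := U.powerset.finite_toSet.subset fun P hP =>
    mem_coe.2 (mem_powerset.2 fun l hl => (hU l).2 (hP.1 l hl))
  set T := hfin.toFinset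
  have hfiber (l : List α) :
      #(T.filter (l ∈ ·)) = Nat.card {P ∈ lahPartitions S A R m | l ∈ P} := by
    have hcoe : (↑(T.filter (l ∈ ·)) : Set (Finset (List α))) =
        {P ∈ lahPartitions S A R m | l ∈ P} := by
      ext P
      simp [T]
    rw [← hcoe, Nat.card_coe_set_eq, Set.ncard_coe_finset]
  calc A.card * Nat.card (lahPartitions S A R m) = ∑ P ∈ T, ∑ l ∈ P, l.length := by
        rw [Nat.card_eq_card_finite_toFinset hfin, mul_comm, ← smul_eq_mul, ← sum_const]
        exact sum_congr rfl fun P hP => (sum_length_eq_card (hfin.mem_toFinset.1 hP)).symm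
    _ = ∑ l ∈ U, ∑ P ∈ T.filter (l ∈ ·), l.length := sum_comm' fun P l => by
        simp only [mem_filter]
        exact ⟨fun ⟨hP, hl⟩ => ⟨⟨hP, hl⟩, (hU l).2 ((hfin.mem_toFinset.1 hP).1 l hl)⟩,
          fun h => h.1⟩
    _ = _ := sum_congr rfl fun l hl => by
        rw [sum_const, smul_eq_mul, mul_comm, hfiber, card_lahPartitions_mem ((hU l).1 hl) hm]

end Blocks

/-- An enumeration of the blocks (`mem_lahBlocks`), sorted by their length `s` and by the
distinguished element they contain, if any. -/
noncomputable def lahBlocks [DecidableEq α] (S : Set ℕ) (A R : Finset α) : Finset (List α) :=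
  ((Icc 1 ((A \ R).card + 1)).filter (· ∈ S)).biUnion fun s =>
    nodupLists (A \ R) s ∪ R.biUnion fun i => (nodupLists (insert i (A \ R)) s).filter (i ∈ ·)

section LahBlocks

variable [DecidableEq α] {S : Set ℕ} {A R : Finset α}

theorem mem_lahBlocks (hRA : R ⊆ A) {l : List α} :
    l ∈ lahBlocks S A R ↔ IsLahBlock S A R l := by
  constructor
  · simp only [lahBlocks, mem_biUnion, mem_filter, mem_Icc, mem_union]
    rintro ⟨s, ⟨⟨hs, -⟩, hsS⟩, hl | ⟨i, hi, hl, hil⟩⟩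
    · obtain ⟨hnd, rfl, hB⟩ := mem_nodupLists.1 hl
      exact ⟨List.ne_nil_of_length_pos hs, hnd, hsS, fun x hx => (mem_sdiff.1 (hB x hx)).1,
        fun j hj _ _ hjl _ => absurd hj (mem_sdiff.1 (hB j hjl)).2⟩
    · have hsep {j} := eq_of_mem_of_mem_nodupLists_insert_sdiff (j := j) hl
      obtain ⟨hnd, rfl, hB⟩ := mem_nodupLists.1 hl
      exact ⟨List.ne_nil_of_mem hil, hnd, hsS,
        fun x hx => insert_subset (hRA hi) sdiff_subset (hB x hx),
        fun j hj j' hj' hjl hj'l => (hsep hj hjl).trans (hsep hj' hj'l).symm⟩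
  · rintro ⟨hne, hnd, hS, hA, hR⟩
    simp only [lahBlocks, mem_biUnion, mem_filter, mem_Icc, mem_union]
    by_cases h : ∃ i ∈ R, i ∈ l
    · obtain ⟨i, hi, hil⟩ := h
      have hl : l ∈ nodupLists (insert i (A \ R)) l.length := mem_nodupLists.2 ⟨hnd, rfl,
        fun x hx => if hxR : x ∈ R then mem_insert.2 (.inl (hR x hxR i hi hx hil))
          else mem_insert_of_mem (mem_sdiff.2 ⟨hA x hx, hxR⟩)⟩
      refine ⟨l.length, ⟨⟨List.length_pos_iff.2 hne, ?_⟩, hS⟩, .inr ⟨i, hi, hl, hil⟩⟩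
      exact (length_le_card_of_mem_nodupLists hl).trans (card_insert_le _ _)
    · simp only [not_exists, not_and] at h
      have hl : l ∈ nodupLists (A \ R) l.length :=
        mem_nodupLists.2 ⟨hnd, rfl, fun x hx => mem_sdiff.2 ⟨hA x hx, fun hxR => h x hxR hx⟩⟩
      exact ⟨l.length, ⟨⟨List.length_pos_iff.2 hne,
        (length_le_card_of_mem_nodupLists hl).trans (Nat.le_succ _)⟩, hS⟩, .inl hl⟩

theorem sum_lahBlocks {M : Type*} [AddCommMonoid M] (g : List α → M) :
    ∑ l ∈ lahBlocks S A R, g l = ∑ s ∈ (Icc 1 ((A \ R).card + 1)).filter (· ∈ S),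
      (∑ l ∈ nodupLists (A \ R) s, g l +
        ∑ i ∈ R, ∑ l ∈ (nodupLists (insert i (A \ R)) s).filter (i ∈ ·), g l) := by
  rw [lahBlocks, sum_biUnion]
  · refine sum_congr rfl fun s _ => ?_
    rw [sum_union, sum_biUnion]
    · intro i _ j hj hij
      refine disjoint_left.2 fun l hli hlj => hij ?_
      exact (eq_of_mem_of_mem_nodupLists_insert_sdiff (mem_filter.1 hli).1 hj
        (mem_filter.1 hlj).2).symm
    · refine disjoint_left.2 fun l hl hl' => ?_
      obtain ⟨i, hi, hil⟩ := mem_biUnion.1 hl'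
      exact (mem_sdiff.1 ((mem_nodupLists.1 hl).2.2 i (mem_filter.1 hil).2)).2 hi
  · intro s _ s' _ hss'
    refine disjoint_left.2 fun l hl hl' => hss' ?_
    have hlen {t} (h : l ∈ nodupLists (A \ R) t ∪
        R.biUnion fun i => (nodupLists (insert i (A \ R)) t).filter (i ∈ ·)) : l.length = t := by
      rcases mem_union.1 h with h | h
      · exact (mem_nodupLists.1 h).2.1
      · obtain ⟨i, -, h⟩ := mem_biUnion.1 h
        exact (mem_nodupLists.1 (mem_filter.1 h).1).2.1
    exact (hlen hl).symm.trans (hlen hl')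

end LahBlocks

section RemoveBlock

variable [DecidableEq α] {S : Set ℕ} {A R : Finset α} {l : List α} {s : ℕ}

theorem card_lahPartitions_sdiff_of_mem_nodupLists_sdiff (hRA : R ⊆ A)
    (hl : l ∈ nodupLists (A \ R) s) (k : ℕ) :
    Nat.card (lahPartitions S (A \ l.toFinset) (R \ l.toFinset) (k + R.card)) =
      srLah S R.card ((A \ R).card - s) k := by
  have hs := length_le_card_of_mem_nodupLists hl
  obtain ⟨hnd, rfl, hB⟩ := mem_nodupLists.1 hl
  have hlR : R \ l.toFinset = R := sdiff_eq_self_of_disjoint <| disjoint_left.2 fun i hi hil =>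
    (mem_sdiff.1 (hB i (List.mem_toFinset.1 hil))).2 hi
  rw [hlR]
  refine card_lahPartitions_eq_srLah (hlR ▸ sdiff_subset_sdiff hRA le_rfl) rfl ?_
  rw [card_sdiff_of_subset fun x hx => (mem_sdiff.1 (hB x (List.mem_toFinset.1 hx))).1,
    List.toFinset_card_of_nodup hnd]
  rw [card_sdiff_of_subset hRA] at hs ⊢
  have := card_le_card hRA
  omega

theorem card_lahPartitions_sdiff_of_mem_nodupLists_insert (hRA : R ⊆ A) {i : α} (hi : i ∈ R)
    (hl : l ∈ (nodupLists (insert i (A \ R)) s).filter (i ∈ ·)) (k : ℕ) :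
    Nat.card (lahPartitions S (A \ l.toFinset) (R \ l.toFinset) (k + (R.card - 1))) =
      srLah S (R.card - 1) ((A \ R).card + 1 - s) k := by
  obtain ⟨hl, hil⟩ := mem_filter.1 hl
  have hs := length_le_card_of_mem_nodupLists hl
  have hsep {j} := eq_of_mem_of_mem_nodupLists_insert_sdiff (j := j) hl
  obtain ⟨hnd, rfl, hB⟩ := mem_nodupLists.1 hl
  have hlA : l.toFinset ⊆ A := fun x hx =>
    insert_subset (hRA hi) sdiff_subset (hB x (List.mem_toFinset.1 hx))
  have hlR : R \ l.toFinset = R.erase i := by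
    ext j
    simp only [mem_sdiff, mem_erase, List.mem_toFinset]
    exact ⟨fun ⟨hj, hjl⟩ => ⟨fun h => hjl (h ▸ hil), hj⟩,
      fun ⟨hji, hj⟩ => ⟨hj, fun hjl => hji (hsep hj hjl)⟩⟩
  rw [hlR, ← card_erase_of_mem hi]
  refine card_lahPartitions_eq_srLah (fun j hj => ?_) rfl ?_
  · rw [← hlR] at hj
    exact sdiff_subset_sdiff hRA le_rfl hj
  · rw [card_sdiff_of_subset hlA, List.toFinset_card_of_nodup hnd, card_erase_of_mem hi]
    rw [card_insert_of_notMem fun h => (mem_sdiff.1 h).2 hi, card_sdiff_of_subset hRA] at hs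
    rw [card_sdiff_of_subset hRA]
    have := card_le_card hRA
    have := card_pos.2 ⟨i, hi⟩
    omega

end RemoveBlock

theorem srLah_mul_eq_sum (S : Set ℕ) (r n k : ℕ) (hk : 1 ≤ k) :
    (n + r) * srLah S r n k = ∑ s ∈ (Icc 1 (n + 1)).filter (· ∈ S),
      (s * s.factorial * n.choose s * srLah S r (n - s) (k - 1) +
        r * (s * s.factorial * n.choose (s - 1) * srLah S (r - 1) (n + 1 - s) k)) := by
  set R := univ.filter fun i : Fin (n + r) => (i : ℕ) < r
  have hR : R.card = r := by rw [Fin.card_filter_val_lt]; omega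
  have hB : (univ \ R).card = n := by rw [card_univ_sdiff, Fintype.card_fin, hR]; omega
  have hcount := card_mul_card_lahPartitions (fun l => mem_lahBlocks (S := S) (subset_univ R))
    (show 1 ≤ k + r by omega)
  rw [card_univ, Fintype.card_fin, ← srLahSet_eq_lahPartitions, ← srLah, sum_lahBlocks, hB]
    at hcount
  rw [hcount]
  refine sum_congr rfl fun s hs => ?_
  have hs₁ : 1 ≤ s := (mem_Icc.1 (mem_filter.1 hs).1).1
  have hsdiff : ∀ l ∈ nodupLists (univ \ R) s,
      l.length * Nat.card (lahPartitions S (univ \ l.toFinset) (R \ l.toFinset) (k + r - 1)) =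
        s * srLah S r (n - s) (k - 1) := fun l hl => by
    rw [(mem_nodupLists.1 hl).2.1, show k + r - 1 = k - 1 + R.card by omega,
      card_lahPartitions_sdiff_of_mem_nodupLists_sdiff (subset_univ R) hl, hR, hB]
  have hinsert : ∀ i ∈ R, ∑ l ∈ (nodupLists (insert i (univ \ R)) s).filter (i ∈ ·),
      l.length * Nat.card (lahPartitions S (univ \ l.toFinset) (R \ l.toFinset) (k + r - 1)) =
        s.factorial * n.choose (s - 1) * (s * srLah S (r - 1) (n + 1 - s) k) := fun i hi => by
    have hr : 1 ≤ r := hR ▸ card_pos.2 ⟨i, hi⟩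
    rw [sum_const_nat fun l hl => by
      rw [(mem_nodupLists.1 (mem_filter.1 hl).1).2.1, show k + r - 1 = k + (R.card - 1) by omega,
        card_lahPartitions_sdiff_of_mem_nodupLists_insert (subset_univ R) hi hl, hR, hB],
      card_nodupLists_insert_filter_mem (fun h => (mem_sdiff.1 h).2 hi), hB,
      Nat.descFactorial_eq_factorial_mul_choose, ← mul_assoc s, Nat.mul_factorial_pred (by omega)]
  rw [sum_const_nat hsdiff, sum_congr rfl hinsert, sum_const, smul_eq_mul, hR, card_nodupLists,
    hB, Nat.descFactorial_eq_factorial_mul_choose]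
  ring

theorem srLahZ_natCast (S : Set ℕ) (r a b : ℕ) : srLahZ S r a b = srLah S r a b := by
  simp [srLahZ]

theorem srLah_identity_colour_element_general (S : Set ℕ) (r n k : ℕ)
    (hk : 1 ≤ k) :
    ((n : ℤ) + r) * srLah S r n k =
      (∑ᶠ s ∈ S, (s : ℤ) * s.factorial * (n.choose s : ℤ) *
        srLahZ S r ((n : ℤ) - s) ((k : ℤ) - 1)) +
      r * ∑ᶠ s ∈ S, (s : ℤ) * s.factorial * (n.choose (s - 1) : ℤ) *
        srLahZ S (r - 1) ((n : ℤ) - s + 1) k := by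
  have hmem {s : ℕ} (hs₀ : s ≠ 0) (hs : s ≤ n + 1) (hsS : s ∈ S) :
      s ∈ (Icc 1 (n + 1)).filter (· ∈ S) :=
    mem_filter.2 ⟨mem_Icc.2 ⟨Nat.one_le_iff_ne_zero.2 hs₀, hs⟩, hsS⟩
  rw [finsum_mem_eq_sum_of_subset _ ?_ fun s hs => (mem_filter.1 hs).2,
    finsum_mem_eq_sum_of_subset _ ?_ fun s hs => (mem_filter.1 hs).2, mul_sum, ← sum_add_distrib]
  · have key := congrArg (Nat.cast : ℕ → ℤ) (srLah_mul_eq_sum S r n k hk)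
    push_cast at key
    rw [key]
    refine sum_congr rfl fun s hs => ?_
    obtain ⟨hs₁, hs₂⟩ := mem_Icc.1 (mem_filter.1 hs).1
    have hncast : (n : ℤ) - s + 1 = ((n + 1 - s : ℕ) : ℤ) := by omega
    have hkcast : (k : ℤ) - 1 = ((k - 1 : ℕ) : ℤ) := by omega
    rw [hncast, hkcast, srLahZ_natCast]
    rcases Nat.lt_or_ge n s with hns | hsn
    · simp [Nat.choose_eq_zero_of_lt hns]
    · rw [← Nat.cast_sub hsn, srLahZ_natCast]
  · rintro s ⟨hsS, hs⟩
    refine hmem (by rintro rfl; simp at hs) ?_ hsS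
    by_contra h
    simp [Nat.choose_eq_zero_of_lt (by omega : n < s - 1)] at hs
  · rintro s ⟨hsS, hs⟩
    refine hmem (by rintro rfl; simp at hs) ?_ hsS
    by_contra h
    simp [Nat.choose_eq_zero_of_lt (by omega : n < s)] at hs

/-- `(n+r)·L_{S,r}(n,k) = Σ_{s∈S} s·s!·C(n,s)·L_{S,r}(n−s,k−1)
+ r·Σ_{s∈S} s·s!·C(n,s−1)·L_{S,r−1}(n−s+1,k)` for `r ≥ 1`. -/
theorem srLah_identity_colour_element (S : Set ℕ) (hS : ∀ s ∈ S, 0 < s) (r n k : ℕ)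
    (hr : 1 ≤ r) (hn : 1 ≤ n) (hk : 1 ≤ k) :
    ((n : ℤ) + r) * srLah S r n k =
      (∑ᶠ s ∈ S, (s : ℤ) * s.factorial * (n.choose s : ℤ) *
        srLahZ S r ((n : ℤ) - s) ((k : ℤ) - 1)) +
      r * ∑ᶠ s ∈ S, (s : ℤ) * s.factorial * (n.choose (s - 1) : ℤ) *
        srLahZ S (r - 1) ((n : ℤ) - s + 1) k :=
  srLah_identity_colour_element_general S r n k hk
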